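/- arXiv:1611.00621 — 3 statements merged into one kernel-verified Lean document; each statement's English description precedes it below -/
import Mathlib

section
/- Let (X,T) be a topological dynamical system (X compact metric, T continuous), let x ∈ X, and let μ be an ergodic T-invariant Borel probability measure supported on the orbit closure of x. Then for every ε > 0 and all positive integers p, N there exist positive integers n, m, both divisible by p, with m ≥ N, such that d_BL(E_m(T^n(x)), μ) < ε, where E_m(y) = (1/m) Σ_{j=0}^{m−1} δ_{T^j(y)} is the m-th empirical measure. -/
open MeasureTheory Filter

/-- The bounded-Lipschitz metric on measures defined from a fixed countable
family `f : ℕ → X → ℝ` of test functions. -/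
noncomputable def dBL {X : Type*} [MetricSpace X] [MeasurableSpace X]
    (f : ℕ → X → ℝ) (μ ν : Measure X) : ℝ :=
  ∑' n : ℕ, (1 / 2 : ℝ) ^ (n + 1) * |(∫ x, f n x ∂μ) - ∫ x, f n x ∂ν|

/-- `f` is a countable dense sequence in the unit ball of bounded Lipschitz
functions. -/
def IsBLUnitFamily {X : Type*} [MetricSpace X] (f : ℕ → X → ℝ) : Prop :=
  (∀ n, ∃ L : NNReal, LipschitzWith L (f n) ∧ ∀ x, |f n x| + L ≤ 1) ∧
  (∀ g : X → ℝ, (∃ L : NNReal, LipschitzWith L g ∧ ∀ x, |g x| + L ≤ 1) →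
    ∀ ε > 0, ∃ n, ∀ x, |f n x - g x| ≤ ε)

/-- The `m`-th empirical measure `E_m(y) = (1/m) ∑_{j<m} δ_{T^j y}`. -/
noncomputable def empiricalMeasure {X : Type*} [MeasurableSpace X] (T : X → X) (m : ℕ)
    (y : X) : Measure X :=
  (m : ENNReal)⁻¹ • ∑ j ∈ Finset.range m, Measure.dirac (T^[j] y)

open Function Topology

/-!
By the mean ergodic theorem, the Birkhoff averages of a test function converge in `L²(μ)`,
hence in measure, to its `μ`-integral. So for every large time `m` the points `y` at which the
averages of the first `K` test functions are within `ε/6` of their means form a set of positive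
measure, which meets the orbit closure of `x` because `μ` gives that closure full mass. An orbit
point `T^k x` close enough to such a `y` shadows it for `m + p` steps, and moving `k` up to the
next multiple `n` of `p` changes the averages by at most `2p/m`. As `dBL` gives its `j`-th test
function weight `2^{-(j+1)}`, the first `K` of them determine `dBL` up to `2^{1-K}`.
-/

namespace MeasureTheory

variable {α : Type*} [MeasurableSpace α] {μ : Measure α} {T : α → α}

noncomputable def koopman (hT : MeasurePreserving T μ μ) : Lp ℝ 2 μ →L[ℝ] Lp ℝ 2 μ :=
  (Lp.compMeasurePreservingₗᵢ ℝ T hT).toContinuousLinearMap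

theorem norm_koopman_le (hT : MeasurePreserving T μ μ) : ‖koopman hT‖ ≤ 1 :=
  LinearIsometry.norm_toContinuousLinearMap_le _

theorem coeFn_koopman (hT : MeasurePreserving T μ μ) (G : Lp ℝ 2 μ) :
    ⇑(koopman hT G) =ᵐ[μ] G ∘ T :=
  Lp.coeFn_compMeasurePreserving G hT

theorem coeFn_koopman_iterate_toLp (hT : MeasurePreserving T μ μ) {g : α → ℝ}
    (hg : MemLp g 2 μ) (j : ℕ) :
    ⇑((koopman hT)^[j] (hg.toLp g)) =ᵐ[μ] g ∘ T^[j] := by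
  have hiter : (koopman hT)^[j] = Lp.compMeasurePreserving T^[j] (hT.iterate j) :=
    Lp.compMeasurePreserving_iterate hT j
  rw [hiter]
  exact (Lp.coeFn_compMeasurePreserving _ _).trans
    ((hT.iterate j).quasiMeasurePreserving.ae_eq_comp hg.coeFn_toLp)

theorem coeFn_birkhoffAverage_koopman_toLp (hT : MeasurePreserving T μ μ) {g : α → ℝ}
    (hg : MemLp g 2 μ) (m : ℕ) :
    ⇑(birkhoffAverage ℝ (koopman hT) id m (hg.toLp g)) =ᵐ[μ] birkhoffAverage ℝ T g m := by
  have hsum : ⇑(birkhoffSum (koopman hT) id m (hg.toLp g)) =ᵐ[μ] birkhoffSum T g m := by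
    induction m with
    | zero => simpa using Lp.coeFn_zero ℝ 2 μ
    | succ m ih =>
      filter_upwards [Lp.coeFn_add (birkhoffSum (koopman hT) id m (hg.toLp g))
        ((koopman hT)^[m] (hg.toLp g)), ih,
        coeFn_koopman_iterate_toLp hT hg m] with y hadd hy hm
      simp only [birkhoffSum_succ, hadd, Pi.add_apply, hy, hm, id, comp_apply]
  filter_upwards [Lp.coeFn_smul (m : ℝ)⁻¹ (birkhoffSum (koopman hT) id m (hg.toLp g)), hsum]
    with y hsmul hy
  simp only [birkhoffAverage, hsmul, Pi.smul_apply, hy]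

theorem koopman_toLp_const (hT : MeasurePreserving T μ μ) [IsFiniteMeasure μ] (c : ℝ) :
    koopman hT ((memLp_const c).toLp (fun _ => c)) = (memLp_const c).toLp (fun _ => c) :=
  Lp.toLp_compMeasurePreserving (memLp_const c) hT

theorem Ergodic.exists_ae_eq_const_of_koopman_eq (h : Ergodic T μ) {w : Lp ℝ 2 μ}
    (hw : koopman h.toMeasurePreserving w = w) : ∃ c : ℝ, w =ᵐ[μ] fun _ => c := by
  have hinv : ⇑w ∘ T =ᵐ[μ] w := by
    simpa [hw] using (coeFn_koopman h.toMeasurePreserving w).symm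
  exact h.ae_eq_const_of_ae_eq_comp₀ (Lp.aestronglyMeasurable w).aemeasurable.nullMeasurable hinv

variable [IsProbabilityMeasure μ]

theorem Ergodic.orthogonalProjectionOnto_eqLocus_koopman (h : Ergodic T μ) {g : α → ℝ}
    (hg : MemLp g 2 μ) :
    (((koopman h.toMeasurePreserving).eqLocus (1 : Lp ℝ 2 μ →L[ℝ] Lp ℝ 2 μ))
      |>.orthogonalProjectionOnto (hg.toLp g) : Lp ℝ 2 μ) =
      (memLp_const (∫ z, g z ∂μ)).toLp (fun _ => ∫ z, g z ∂μ) := by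
  set c := ∫ z, g z ∂μ
  refine Submodule.eq_starProjection_of_mem_of_inner_eq_zero
    (LinearMap.mem_eqLocus.mpr (koopman_toLp_const h.toMeasurePreserving c)) fun w hw => ?_
  obtain ⟨cw, hcw⟩ := h.exists_ae_eq_const_of_koopman_eq (LinearMap.mem_eqLocus.mp hw)
  have hdiff : ⇑(hg.toLp g - (memLp_const c).toLp (fun _ => c) : Lp ℝ 2 μ) =ᵐ[μ]
      fun y => g y - c := by
    filter_upwards [Lp.coeFn_sub (hg.toLp g) ((memLp_const c).toLp (fun _ => c)),
      hg.coeFn_toLp, (memLp_const c).coeFn_toLp] with y hsub hgy hcy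
    rw [hsub, Pi.sub_apply, hgy, hcy]
  rw [L2.inner_def, integral_congr_ae (g := fun y => (g y - c) * cw)]
  · rw [integral_mul_const, integral_sub (hg.integrable one_le_two) (integrable_const c)]
    simp [c]
  · filter_upwards [hdiff, hcw] with y hy hwy
    rw [hy, hwy]
    exact Real.inner_apply (g y - c) cw

theorem Ergodic.tendsto_birkhoffAverage_koopman (h : Ergodic T μ) {g : α → ℝ}
    (hg : MemLp g 2 μ) :
    Tendsto (birkhoffAverage ℝ (koopman h.toMeasurePreserving) id · (hg.toLp g)) atTop
      (𝓝 ((memLp_const (∫ z, g z ∂μ)).toLp (fun _ => ∫ z, g z ∂μ))) := by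
  rw [← h.orthogonalProjectionOnto_eqLocus_koopman hg]
  exact (koopman h.toMeasurePreserving).tendsto_birkhoffAverage_orthogonalProjection
    (norm_koopman_le _) _

theorem Ergodic.tendstoInMeasure_birkhoffAverage (h : Ergodic T μ) {g : α → ℝ}
    (hg : MemLp g 2 μ) :
    TendstoInMeasure μ (birkhoffAverage ℝ T g) atTop (fun _ => ∫ z, g z ∂μ) :=
  (tendstoInMeasure_of_tendsto_Lp (h.tendsto_birkhoffAverage_koopman hg)).congr
    (coeFn_birkhoffAverage_koopman_toLp _ hg) (memLp_const _).coeFn_toLp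

theorem Ergodic.eventually_exists_mem_forall_dist_birkhoffAverage_lt (h : Ergodic T μ)
    {ι : Type*} (s : Finset ι) {g : ι → α → ℝ} (hg : ∀ i ∈ s, MemLp (g i) 2 μ) {S : Set α}
    (hS : μ S ≠ 0) {δ : ℝ} (hδ : 0 < δ) :
    ∀ᶠ m in atTop, ∃ y ∈ S, ∀ i ∈ s,
      dist (birkhoffAverage ℝ T (g i) m y) (∫ z, g i z ∂μ) < δ := by
  have hbad : Tendsto (fun m => μ (⋃ i ∈ s,
      {y | δ ≤ dist (birkhoffAverage ℝ T (g i) m y) (∫ z, g i z ∂μ)})) atTop (𝓝 0) := by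
    refine tendsto_of_tendsto_of_tendsto_of_le_of_le tendsto_const_nhds ?_ (fun _ => zero_le)
      (fun m => measure_biUnion_finset_le _ _)
    simpa using tendsto_finsetSum s fun i hi =>
      tendstoInMeasure_iff_dist.1 (h.tendstoInMeasure_birkhoffAverage (hg i hi)) δ hδ
  filter_upwards [hbad.eventually_lt_const (pos_iff_ne_zero.2 hS)] with m hm
  obtain ⟨y, hyS, hy⟩ := Set.not_subset.1 fun hsub => (measure_mono hsub).not_gt hm
  exact ⟨y, hyS, fun i hi => not_le.1 fun hle => hy (Set.mem_biUnion hi hle)⟩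

end MeasureTheory

section BirkhoffAverage

variable {α E : Type*} [NormedAddCommGroup E] [NormedSpace ℝ E] {T : α → α} {g : α → E}

theorem dist_birkhoffAverage_iterate_le {C : ℝ} (hg : ∀ a, ‖g a‖ ≤ C) (m s : ℕ) (y : α) :
    dist (birkhoffAverage ℝ T g m (T^[s] y)) (birkhoffAverage ℝ T g m y) ≤ s * (2 * C) / m := by
  induction s with
  | zero => simp
  | succ s ih =>
    have hstep : dist (birkhoffAverage ℝ T g m (T (T^[s] y)))
        (birkhoffAverage ℝ T g m (T^[s] y)) ≤ 2 * C / m := by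
      rw [dist_birkhoffAverage_apply_birkhoffAverage]
      gcongr
      exact (dist_le_norm_add_norm _ _).trans (by linarith [hg (T^[m] (T^[s] y)), hg (T^[s] y)])
    calc dist (birkhoffAverage ℝ T g m (T^[s + 1] y)) (birkhoffAverage ℝ T g m y)
        ≤ dist (birkhoffAverage ℝ T g m (T (T^[s] y))) (birkhoffAverage ℝ T g m (T^[s] y))
          + dist (birkhoffAverage ℝ T g m (T^[s] y)) (birkhoffAverage ℝ T g m y) := by
          rw [iterate_succ_apply']
          exact dist_triangle _ _ _
      _ ≤ 2 * C / m + s * (2 * C) / m := add_le_add hstep ih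
      _ = (s + 1 : ℕ) * (2 * C) / m := by push_cast; ring

theorem dist_birkhoffAverage_le_of_lipschitzWith [PseudoMetricSpace α] {K : NNReal}
    (hg : LipschitzWith K g) {m : ℕ} {x y : α} {η : ℝ} (hη : 0 ≤ η)
    (hxy : ∀ i < m, dist (T^[i] x) (T^[i] y) ≤ η) :
    dist (birkhoffAverage ℝ T g m x) (birkhoffAverage ℝ T g m y) ≤ K * η := by
  refine (dist_birkhoffAverage_birkhoffAverage_le ℝ T g m x y).trans
    (div_le_of_le_mul₀ m.cast_nonneg (by positivity) ?_)
  calc ∑ i ∈ Finset.range m, dist (g (T^[i] x)) (g (T^[i] y))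
      ≤ ∑ _i ∈ Finset.range m, K * η := Finset.sum_le_sum fun i hi =>
        (hg.dist_le_mul _ _).trans (by gcongr; exact hxy i (Finset.mem_range.1 hi))
    _ = K * η * m := by simp [mul_comm]

theorem exists_dvd_iterate_near_iterate [PseudoMetricSpace α] (hT : Continuous T) {x y : α}
    (hy : y ∈ closure (Set.range fun n => T^[n] x)) {p : ℕ} (hp : 0 < p) (m : ℕ) {η : ℝ}
    (hη : 0 < η) :
    ∃ n s, 0 < n ∧ p ∣ n ∧ s ≤ p ∧ ∀ i < m, dist (T^[i] (T^[n] x)) (T^[i] (T^[s] y)) < η := by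
  have hnear : ∀ᶠ z in 𝓝 y, ∀ i ∈ Finset.range (m + p), dist (T^[i] z) (T^[i] y) < η :=
    (Finset.eventually_all _).2 fun i _ =>
      (hT.iterate i).continuousAt.eventually (Metric.ball_mem_nhds _ hη)
  obtain ⟨_, ⟨k, rfl⟩, hk⟩ := ((mem_closure_iff_frequently.1 hy).and_eventually hnear).exists
  obtain ⟨n, hn⟩ : ∃ n, n = p * (k / p + 1) := ⟨_, rfl⟩
  have hkn : k < n := hn ▸ Nat.lt_mul_div_succ k hp
  have hnk : n ≤ k + p := by have := Nat.mul_div_le k p; rw [hn, mul_add, mul_one]; omega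
  refine ⟨n, n - k, by omega, hn ▸ dvd_mul_right _ _, by omega, fun i hi => ?_⟩
  have := hk (i + (n - k)) (Finset.mem_range.2 (by omega))
  rwa [iterate_add_apply, iterate_add_apply, ← iterate_add_apply T (n - k) k,
    Nat.sub_add_cancel hkn.le] at this

theorem exists_dvd_forall_dist_birkhoffAverage_le [PseudoMetricSpace α] (hT : Continuous T)
    {x y : α} (hy : y ∈ closure (Set.range fun n => T^[n] x)) {p : ℕ} (hp : 0 < p) (m : ℕ)
    {η : ℝ} (hη : 0 < η) :
    ∃ n, 0 < n ∧ p ∣ n ∧ ∀ (g : α → E) (K : NNReal) (C : ℝ), LipschitzWith K g →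
      (∀ a, ‖g a‖ ≤ C) → dist (birkhoffAverage ℝ T g m (T^[n] x)) (birkhoffAverage ℝ T g m y)
        ≤ K * η + p * (2 * C) / m := by
  obtain ⟨n, s, hn, hpn, hs, hnear⟩ := exists_dvd_iterate_near_iterate hT hy hp m hη
  refine ⟨n, hn, hpn, fun g K C hg hC => ?_⟩
  have hC0 : 0 ≤ C := (norm_nonneg _).trans (hC x)
  calc dist (birkhoffAverage ℝ T g m (T^[n] x)) (birkhoffAverage ℝ T g m y)
      ≤ dist (birkhoffAverage ℝ T g m (T^[n] x)) (birkhoffAverage ℝ T g m (T^[s] y))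
        + dist (birkhoffAverage ℝ T g m (T^[s] y)) (birkhoffAverage ℝ T g m y) :=
        dist_triangle _ _ _
    _ ≤ K * η + s * (2 * C) / m :=
        add_le_add (dist_birkhoffAverage_le_of_lipschitzWith hg hη.le fun i hi => (hnear i hi).le)
          (dist_birkhoffAverage_iterate_le hC m s y)
    _ ≤ K * η + p * (2 * C) / m := by gcongr

end BirkhoffAverage

section EmpiricalMeasure

variable {X : Type*} [MeasurableSpace X] (T : X → X) {m : ℕ} (y : X)

theorem isProbabilityMeasure_empiricalMeasure (hm : m ≠ 0) :
    IsProbabilityMeasure (empiricalMeasure T m y) := by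
  constructor
  simp [empiricalMeasure, ENNReal.inv_mul_cancel, hm]

theorem integral_empiricalMeasure [MeasurableSingletonClass X] {E : Type*}
    [NormedAddCommGroup E] [NormedSpace ℝ E] [CompleteSpace E] (g : X → E) (m : ℕ) :
    ∫ z, g z ∂(empiricalMeasure T m y) = birkhoffAverage ℝ T g m y := by
  rw [empiricalMeasure, integral_smul_measure,
    integral_finsetSum_measure fun j _ => integrable_dirac enorm_lt_top]
  simp [integral_dirac, birkhoffAverage, birkhoffSum, ENNReal.toReal_inv]

end EmpiricalMeasure

theorem tsum_half_pow_succ_mul_le {a : ℕ → ℝ} {B δ : ℝ} {K : ℕ} (ha : ∀ j, 0 ≤ a j)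
    (haB : ∀ j, a j ≤ B) (hδ : 0 ≤ δ) (haδ : ∀ j < K, a j ≤ δ) :
    ∑' j, (1 / 2 : ℝ) ^ (j + 1) * a j ≤ δ + B * (1 / 2) ^ K := by
  have hmaj : ∀ j, (1 / 2 : ℝ) ^ (j + 1) * a j ≤ B / 2 / 2 ^ j := fun j => by
    calc (1 / 2 : ℝ) ^ (j + 1) * a j ≤ (1 / 2) ^ (j + 1) * B := by gcongr; exact haB j
      _ = B / 2 / 2 ^ j := by rw [one_div, inv_pow, pow_succ]; field_simp
  have hsum : Summable fun j => (1 / 2 : ℝ) ^ (j + 1) * a j :=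
    (summable_geometric_two' B).of_nonneg_of_le (fun j => by have := ha j; positivity) hmaj
  rw [← hsum.sum_add_tsum_nat_add K]
  gcongr ?_ + ?_
  · calc ∑ j ∈ Finset.range K, (1 / 2 : ℝ) ^ (j + 1) * a j
        ≤ ∑ j ∈ Finset.range K, (1 / 2 : ℝ) ^ j * (δ / 2) := by
          refine Finset.sum_le_sum fun j hj => ?_
          rw [pow_succ, mul_assoc]
          gcongr
          linarith [haδ j (Finset.mem_range.1 hj)]
      _ ≤ 2 * (δ / 2) := by rw [← Finset.sum_mul]; gcongr; exact sum_geometric_two_le K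
      _ = δ := by ring
  · calc ∑' i, (1 / 2 : ℝ) ^ (i + K + 1) * a (i + K)
        ≤ ∑' i, B * (1 / 2) ^ K / 2 / 2 ^ i :=
          ((summable_nat_add_iff K).2 hsum).tsum_le_tsum (fun i => by
            calc (1 / 2 : ℝ) ^ (i + K + 1) * a (i + K) ≤ B / 2 / 2 ^ (i + K) := hmaj _
              _ = B * (1 / 2) ^ K / 2 / 2 ^ i := by rw [one_div, inv_pow, pow_add]; field_simp)
            (summable_geometric_two' _)
      _ = B * (1 / 2) ^ K := tsum_geometric_two' _

theorem dBL_le_of_abs_integral_sub_le {X : Type*} [MetricSpace X] [MeasurableSpace X]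
    {f : ℕ → X → ℝ} (hf : ∀ n x, ‖f n x‖ ≤ 1) {μ ν : Measure X} [IsProbabilityMeasure μ]
    [IsProbabilityMeasure ν] {K : ℕ} {δ : ℝ} (hδ : 0 ≤ δ)
    (h : ∀ j < K, |∫ x, f j x ∂μ - ∫ x, f j x ∂ν| ≤ δ) :
    dBL f μ ν ≤ δ + 2 * (1 / 2) ^ K := by
  have habs : ∀ (ρ : Measure X) [IsProbabilityMeasure ρ] (n : ℕ), |∫ x, f n x ∂ρ| ≤ 1 :=
    fun ρ _ n => by simpa using norm_integral_le_of_norm_le_const (μ := ρ) (ae_of_all _ (hf n))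
  refine tsum_half_pow_succ_mul_le (fun _ => abs_nonneg _) (fun n => ?_) hδ h
  linarith [abs_sub (∫ x, f n x ∂μ) (∫ x, f n x ∂ν), habs μ n, habs ν n]

namespace IsBLUnitFamily

variable {X : Type*} [MetricSpace X] {f : ℕ → X → ℝ}

theorem norm_le_one (hf : IsBLUnitFamily f) (n : ℕ) (x : X) : ‖f n x‖ ≤ 1 := by
  obtain ⟨L, -, hL⟩ := hf.1 n
  rw [Real.norm_eq_abs]
  linarith [hL x, L.coe_nonneg]

theorem lipschitzWith_one (hf : IsBLUnitFamily f) (n : ℕ) : LipschitzWith 1 (f n) := by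
  obtain ⟨L, hLip, hL⟩ := hf.1 n
  refine LipschitzWith.of_dist_le_mul fun a b => (hLip.dist_le_mul a b).trans ?_
  gcongr
  linarith [hL a, abs_nonneg (f n a)]

theorem memLp [MeasurableSpace X] [OpensMeasurableSpace X] (hf : IsBLUnitFamily f)
    (μ : Measure X) [IsFiniteMeasure μ] (n : ℕ) (q : ENNReal) : MemLp (f n) q μ :=
  .of_bound (hf.lipschitzWith_one n).continuous.aestronglyMeasurable 1
    (ae_of_all _ (hf.norm_le_one n))

end IsBLUnitFamily

theorem stmt3_general {X : Type*} [MetricSpace X] [MeasurableSpace X] [BorelSpace X]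
    (f : ℕ → X → ℝ) (hf : IsBLUnitFamily f)
    (T : X → X) (hT : Continuous T) (x : X)
    (μ : Measure X) (hprob : IsProbabilityMeasure μ) (herg : Ergodic T μ)
    (hsupp : μ (closure (Set.range fun n => T^[n] x)) = 1)
    (ε : ℝ) (hε : 0 < ε) (p N : ℕ) (hp : 0 < p) :
    ∃ n m : ℕ, 0 < n ∧ 0 < m ∧ p ∣ n ∧ p ∣ m ∧ N ≤ m ∧
      dBL f (empiricalMeasure T m (T^[n] x)) μ < ε := by
  obtain ⟨K, hK⟩ : ∃ K : ℕ, 2 * (1 / 2 : ℝ) ^ K < ε / 2 := by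
    obtain ⟨K, hK⟩ := exists_pow_lt_of_lt_one (by positivity : 0 < ε / 4) one_half_lt_one
    exact ⟨K, by linarith⟩
  have hgeneric := herg.eventually_exists_mem_forall_dist_birkhoffAverage_lt (Finset.range K)
    (fun j _ => hf.memLp μ j 2) (hsupp ▸ one_ne_zero) (by positivity : 0 < ε / 6)
  have hdrift := (tendsto_const_div_atTop_nhds_zero_nat (p * 2 : ℝ)).eventually_lt_const
    (by positivity : 0 < ε / 6)
  obtain ⟨M, ⟨⟨y, hy, hyK⟩, hM, hNM⟩, hM0⟩ := ((tendsto_id.const_mul_atTop' hp).eventually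
    (hgeneric.and (hdrift.and (eventually_ge_atTop N))) |>.and (eventually_gt_atTop 0)).exists
  simp only [id] at hyK hM hNM
  obtain ⟨n, hn, hpn, hshadow⟩ := exists_dvd_forall_dist_birkhoffAverage_le (E := ℝ) hT hy hp
    (p * M) (by positivity : 0 < ε / 6)
  have := isProbabilityMeasure_empiricalMeasure T (T^[n] x) (by positivity : p * M ≠ 0)
  refine ⟨n, p * M, hn, by positivity, hpn, dvd_mul_right p M, hNM, ?_⟩
  refine (dBL_le_of_abs_integral_sub_le hf.norm_le_one (K := K) (by positivity : 0 ≤ ε / 2)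
    fun j hj => ?_).trans_lt (by linarith)
  rw [integral_empiricalMeasure, ← Real.dist_eq]
  have hj' := hshadow (f j) 1 1 (hf.lipschitzWith_one j) (hf.norm_le_one j)
  rw [NNReal.coe_one, one_mul, mul_one] at hj'
  linarith [hyK j (Finset.mem_range.2 hj),
    dist_triangle (birkhoffAverage ℝ T (f j) (p * M) (T^[n] x))
      (birkhoffAverage ℝ T (f j) (p * M) y) (∫ z, f j z ∂μ)]

theorem stmt3 {X : Type*} [MetricSpace X] [CompactSpace X] [MeasurableSpace X] [BorelSpace X]
    (f : ℕ → X → ℝ) (hf : IsBLUnitFamily f)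
    (T : X → X) (hT : Continuous T) (x : X)
    (μ : Measure X) (hprob : IsProbabilityMeasure μ) (herg : Ergodic T μ)
    (hsupp : μ (closure (Set.range fun n => T^[n] x)) = 1)
    (ε : ℝ) (hε : 0 < ε) (p N : ℕ) (hp : 0 < p) (hN : 0 < N) :
    ∃ n m : ℕ, 0 < n ∧ 0 < m ∧ p ∣ n ∧ p ∣ m ∧ N ≤ m ∧
      dBL f (empiricalMeasure T m (T^[n] x)) μ < ε :=
  stmt3_general f hf T hT x μ hprob herg hsupp ε hε p N hp
end

section
/- Let (X,T) be a dynamical system with the shadowing property. Let ε > 0 and let δ > 0 be such that every δ-pseudo-orbit is ε-traced. If x ∈ X satisfies d(T^n(x), x) < δ for some n ∈ ℕ, then for every ξ > 0 there exist x' ∈ X and a positive integer n' divisible by n such that (a) d(T^{n'}(x'), x') < ξ, and (b) d(T^{jn+i}(x'), T^i(x)) ≤ ε for all i = 0,…,n−1 and all j ≥ 0. -/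
open Filter

/-- `(X,T)` has the shadowing property: for every `ε > 0` there is `δ > 0` such
that every `δ`-pseudo-orbit is `ε`-traced by an actual orbit. -/
def ShadowingProperty {X : Type*} [MetricSpace X] (T : X → X) : Prop :=
  ∀ ε > (0 : ℝ), ∃ δ > (0 : ℝ), ∀ x : ℕ → X,
    (∀ k, dist (T (x k)) (x (k + 1)) < δ) → ∃ y : X, ∀ k, dist (T^[k] y) (x k) < ε

/-! If `y` ε-traces the δ-pseudo-orbit `k ↦ T^[k % n] x`, so does every point `T^[m * n] y` of
its `T^[n]`-orbit. By compactness two points of that orbit, `T^[i * n] y` and `T^[j * n] y`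
with `i < j`, are `ξ`-close; take `x' = T^[i * n] y` and `n' = (j - i) * n`. -/

open Function

lemma dist_iterate_mod_succ_lt {X : Type*} [PseudoMetricSpace X] {T : X → X} {x : X} {n : ℕ}
    {δ : ℝ} (hx : dist (T^[n] x) x < δ) (k : ℕ) :
    dist (T (T^[k % n] x)) (T^[(k + 1) % n] x) < δ := by
  have hδ : 0 < δ := dist_nonneg.trans_lt hx
  rw [← iterate_succ_apply' T, ← Nat.mod_add_mod]
  rcases n.eq_zero_or_pos with rfl | hn
  · simpa using hδ
  rcases Nat.lt_or_eq_of_le (Nat.mod_lt k hn) with hlt | heq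
  · simpa [Nat.mod_eq_of_lt hlt] using hδ
  · rw [← Nat.succ_eq_add_one, heq, Nat.mod_self, iterate_zero_apply]
    exact hx

lemma dist_iterate_iterate_mul_lt {X : Type*} [PseudoMetricSpace X] {T : X → X} {x y : X}
    {n : ℕ} {ε : ℝ} (hy : ∀ k, dist (T^[k] y) (T^[k % n] x) < ε) (m k : ℕ) :
    dist (T^[k] (T^[m * n] y)) (T^[k % n] x) < ε := by
  rw [← iterate_add_apply, ← Nat.add_mul_mod_self_right k m n]
  exact hy _

lemma CompactSpace.exists_lt_dist_lt {X : Type*} [PseudoMetricSpace X] [CompactSpace X]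
    (u : ℕ → X) {ξ : ℝ} (hξ : 0 < ξ) : ∃ i j, i < j ∧ dist (u j) (u i) < ξ := by
  obtain ⟨a, -, φ, hφ, hlim⟩ := isCompact_univ.tendsto_subseq (x := u) fun _ => Set.mem_univ _
  obtain ⟨N, hN⟩ := Metric.cauchySeq_iff'.mp hlim.cauchySeq ξ hξ
  exact ⟨φ N, φ (N + 1), hφ N.lt_add_one, hN (N + 1) N.le_succ⟩

theorem stmt5_general {X : Type*} [MetricSpace X] [CompactSpace X]
    (T : X → X)
    (ε δ : ℝ)
    (hδ : ∀ x : ℕ → X, (∀ k, dist (T (x k)) (x (k + 1)) < δ) →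
      ∃ y : X, ∀ k, dist (T^[k] y) (x k) < ε)
    (x : X) (n : ℕ) (hn : 0 < n) (hx : dist (T^[n] x) x < δ)
    (ξ : ℝ) (hξ : 0 < ξ) :
    ∃ (x' : X) (n' : ℕ), 0 < n' ∧ n ∣ n' ∧ dist (T^[n'] x') x' < ξ ∧
      ∀ j : ℕ, ∀ i < n, dist (T^[j * n + i] x') (T^[i] x) ≤ ε := by
  obtain ⟨y, hy⟩ := hδ (fun k => T^[k % n] x) (dist_iterate_mod_succ_lt hx)
  obtain ⟨i, j, hij, hret⟩ := CompactSpace.exists_lt_dist_lt (fun m => T^[m * n] y) hξ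
  refine ⟨T^[i * n] y, (j - i) * n, Nat.mul_pos (Nat.sub_pos_of_lt hij) hn, dvd_mul_left n _,
    ?_, fun l r hr => ?_⟩
  · rwa [← iterate_add_apply, ← Nat.add_mul, Nat.sub_add_cancel hij.le]
  · have htrace := dist_iterate_iterate_mul_lt hy i (l * n + r)
    rw [Nat.mul_add_mod_of_lt hr] at htrace
    exact htrace.le

theorem stmt5 {X : Type*} [MetricSpace X] [CompactSpace X]
    (T : X → X) (hT : Continuous T) (hsh : ShadowingProperty T)
    (ε δ : ℝ) (hε : 0 < ε) (hδpos : 0 < δ)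
    (hδ : ∀ x : ℕ → X, (∀ k, dist (T (x k)) (x (k + 1)) < δ) →
      ∃ y : X, ∀ k, dist (T^[k] y) (x k) < ε)
    (x : X) (n : ℕ) (hn : 0 < n) (hx : dist (T^[n] x) x < δ)
    (ξ : ℝ) (hξ : 0 < ξ) :
    ∃ (x' : X) (n' : ℕ), 0 < n' ∧ n ∣ n' ∧ dist (T^[n'] x') x' < ξ ∧
      ∀ j : ℕ, ∀ i < n, dist (T^[j * n + i] x') (T^[i] x) ≤ ε :=
  stmt5_general T ε δ hδ x n hn hx ξ hξ
end

section
/- Let (X,T) be a dynamical system with the shadowing property. Let ε > 0 and let δ > 0 be provided for ε/4 by the shadowing property. If x ∈ X satisfies d(T^n(x), x) < δ for some n ∈ ℕ, then there exists a point z ∈ X such that (1) z is regularly recurrent and the orbit closure of z with T restricted to it is an odometer (a minimal equicontinuous system with a regularly recurrent transitive point), and (2) d(T^{jn+i}(z), T^i(x)) ≤ ε for all j ≥ 0 and i = 0,1,…,n−1. -/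
open Filter

/-- `z` is regularly recurrent: for every neighborhood `U` of `z` there is
`k ≥ 1` with `T^{kn}(z) ∈ U` for all `n`. -/
def RegularlyRecurrent {X : Type*} [TopologicalSpace X] (T : X → X) (z : X) : Prop :=
  ∀ U ∈ nhds z, ∃ k : ℕ, 0 < k ∧ ∀ n : ℕ, T^[k * n] z ∈ U

/-- A dynamical system is an odometer if it is equicontinuous and has a
regularly recurrent point with dense orbit. -/
def IsOdometer {Y : Type*} [MetricSpace Y] (S : Y → Y) : Prop :=
  Equicontinuous (fun n : ℕ => S^[n]) ∧
    ∃ z : Y, RegularlyRecurrent S z ∧ Dense (Set.range fun n => S^[n] z)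

/-- The orbit closure of `z`. -/
def orbitClosure {X : Type*} [TopologicalSpace X] (T : X → X) (z : X) : Set X :=
  closure (Set.range fun n => T^[n] z)

/-! Shadowing the periodic pseudo-orbit `x, T x, …, T^[n-1] x, x, …` gives a point whose orbit
`ε/4`-traces it. From any point `w` and period `p`, a near return of `T^[p]` along the orbit of `w`
closes up a periodic pseudo-orbit of some period `p' ∈ pℕ`; shadowing it gives a point that
tracks `w` modulo `p` and whose orbit is nearly `p'`-periodic. Iterating with precisions
`η / 2 ^ m`, the errors are summable, and a limit point `z` of the resulting points is nearly
periodic at every scale. Such a point is regularly recurrent, and on its orbit closure each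
`T^[j]` is uniformly close to `T^[j % k]`, which gives equicontinuity. -/

open Function Set Metric Topology

section NearlyPeriodic

variable {X : Type*} [MetricSpace X] {T : X → X} {k : ℕ} {ρ ρ' : ℝ} {w z : X}

def IsPeriodicUpTo (T : X → X) (k : ℕ) (ρ : ℝ) (w : X) : Prop :=
  ∀ a b, a ≡ b [MOD k] → dist (T^[a] w) (T^[b] w) ≤ ρ

def IsNearlyPeriodic (T : X → X) (z : X) : Prop :=
  ∀ ρ > 0, ∃ k > 0, IsPeriodicUpTo T k ρ z

theorem IsPeriodicUpTo.iterate (h : IsPeriodicUpTo T k ρ w) (c : ℕ) :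
    IsPeriodicUpTo T k ρ (T^[c] w) := by
  intro a b hab
  simp only [← iterate_add_apply]
  exact h _ _ (hab.add_right c)

theorem IsPeriodicUpTo.mono (h : IsPeriodicUpTo T k ρ w) (hρ : ρ ≤ ρ') :
    IsPeriodicUpTo T k ρ' w :=
  fun a b hab => (h a b hab).trans hρ

theorem isClosed_setOf_isPeriodicUpTo (hT : Continuous T) (k : ℕ) (ρ : ℝ) :
    IsClosed {w | IsPeriodicUpTo T k ρ w} := by
  simp only [IsPeriodicUpTo, ofPred_forall]
  exact isClosed_iInter fun a => isClosed_iInter fun b => isClosed_iInter fun _ =>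
    isClosed_le ((hT.iterate a).dist (hT.iterate b)) continuous_const

theorem IsPeriodicUpTo.of_mem_orbitClosure (hT : Continuous T) (h : IsPeriodicUpTo T k ρ z)
    {y : X} (hy : y ∈ orbitClosure T z) : IsPeriodicUpTo T k ρ y :=
  closure_minimal (range_subset_iff.2 h.iterate) (isClosed_setOf_isPeriodicUpTo hT k ρ) hy

theorem IsNearlyPeriodic.regularlyRecurrent (h : IsNearlyPeriodic T z) :
    RegularlyRecurrent T z := by
  intro U hU
  obtain ⟨r, hr, hball⟩ := Metric.mem_nhds_iff.1 hU
  obtain ⟨k, hk, hkz⟩ := h (r / 2) (half_pos hr)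
  refine ⟨k, hk, fun c => hball ?_⟩
  have hdist := hkz (k * c) 0 (Nat.modEq_zero_iff_dvd.2 (dvd_mul_right k c))
  rw [iterate_zero_apply] at hdist
  exact mem_ball.2 (by linarith)

theorem IsNearlyPeriodic.equicontinuous (hT : Continuous T) (h : IsNearlyPeriodic T z)
    (hdense : Dense (range fun c => T^[c] z)) : Equicontinuous fun j => T^[j] := by
  intro x₀
  rw [Metric.equicontinuousAt_iff_right]
  intro ε hε
  obtain ⟨k, hk, hkz⟩ := h (ε / 3) (by positivity)
  have hper : ∀ y, IsPeriodicUpTo T k (ε / 3) y := fun y =>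
    IsPeriodicUpTo.of_mem_orbitClosure hT hkz (hdense y)
  have hnear : ∀ᶠ y in 𝓝 x₀, ∀ i : Fin k, dist (T^[i] x₀) (T^[i] y) < ε / 3 :=
    Filter.eventually_all.2 fun i => by
      simpa only [dist_comm] using
        Metric.tendsto_nhds.1 ((hT.iterate i).tendsto x₀) _ (by positivity)
  -- `T^[j]` is `ε / 3`-close to `T^[j % k]` everywhere, so only finitely many maps matter
  filter_upwards [hnear] with y hy j
  have hj : j % k ≡ j [MOD k] := Nat.mod_modEq j k
  have hy' : dist (T^[j % k] x₀) (T^[j % k] y) < ε / 3 := hy ⟨j % k, Nat.mod_lt j hk⟩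
  calc dist (T^[j] x₀) (T^[j] y)
      ≤ dist (T^[j] x₀) (T^[j % k] x₀) + dist (T^[j % k] x₀) (T^[j % k] y) +
          dist (T^[j % k] y) (T^[j] y) := dist_triangle4 _ _ _ _
    _ < ε := by linarith [hper x₀ j (j % k) hj.symm, hper y (j % k) j hj]

theorem IsNearlyPeriodic.isOdometer (hT : Continuous T) (h : IsNearlyPeriodic T z)
    (hdense : Dense (range fun c => T^[c] z)) : IsOdometer T :=
  ⟨h.equicontinuous hT hdense, z, h.regularlyRecurrent, hdense⟩

theorem mapsTo_orbitClosure (hT : Continuous T) (z : X) :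
    MapsTo T (orbitClosure T z) (orbitClosure T z) :=
  MapsTo.closure (by rintro _ ⟨a, rfl⟩; exact ⟨a + 1, iterate_succ_apply' T a z⟩) hT

theorem IsNearlyPeriodic.isOdometer_restrict_orbitClosure (hT : Continuous T)
    (h : IsNearlyPeriodic T z) :
    ∃ hmaps : MapsTo T (orbitClosure T z) (orbitClosure T z),
      IsOdometer (hmaps.restrict T _ _) := by
  let hmaps := mapsTo_orbitClosure hT z
  let z' : orbitClosure T z := ⟨z, subset_closure ⟨0, rfl⟩⟩
  have hiter : ∀ c, ((hmaps.restrict T _ _)^[c] z' : X) = T^[c] z :=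
    hmaps.coe_iterate_restrict z'
  refine ⟨hmaps, IsNearlyPeriodic.isOdometer (z := z') (hT.restrict hmaps) ?_ ?_⟩
  · intro ρ hρ
    obtain ⟨k, hk, hkz⟩ := h ρ hρ
    refine ⟨k, hk, fun a b hab => ?_⟩
    rw [Subtype.dist_eq, hiter, hiter]
    exact hkz a b hab
  · rw [Subtype.dense_iff, ← range_comp]
    exact (congrArg closure (congrArg range (funext hiter))).ge

end NearlyPeriodic

section Tracking

variable {X : Type*} [MetricSpace X] {T : X → X} {p p' : ℕ} {η η' ρ : ℝ} {w w' w'' : X}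

def TracksModulo (T : X → X) (p : ℕ) (η : ℝ) (w' w : X) : Prop :=
  ∀ t, ∃ s, s ≡ t [MOD p] ∧ dist (T^[t] w') (T^[s] w) ≤ η

theorem TracksModulo.refl (T : X → X) (p : ℕ) (w : X) : TracksModulo T p 0 w w :=
  fun t => ⟨t, rfl, (dist_self _).le⟩

theorem TracksModulo.trans (h₁ : TracksModulo T p' η' w'' w') (h₂ : TracksModulo T p η w' w)
    (hdvd : p ∣ p') : TracksModulo T p (η' + η) w'' w := by
  intro t
  obtain ⟨s', hs', hd'⟩ := h₁ t
  obtain ⟨s, hs, hd⟩ := h₂ s'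
  exact ⟨s, hs.trans (hs'.of_dvd hdvd), (dist_triangle _ _ _).trans (add_le_add hd' hd)⟩

theorem TracksModulo.isPeriodicUpTo (h : TracksModulo T p η w' w)
    (hw : IsPeriodicUpTo T p ρ w) : IsPeriodicUpTo T p (η + ρ + η) w' := by
  intro a b hab
  obtain ⟨sa, hsa, hda⟩ := h a
  obtain ⟨sb, hsb, hdb⟩ := h b
  calc dist (T^[a] w') (T^[b] w')
      ≤ dist (T^[a] w') (T^[sa] w) + dist (T^[sa] w) (T^[sb] w) + dist (T^[sb] w) (T^[b] w') :=
        dist_triangle4 _ _ _ _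
    _ ≤ η + ρ + η := by
        gcongr
        · exact hw _ _ (hsa.trans (hab.trans hsb.symm))
        · rwa [dist_comm]

theorem TracksModulo.dist_le_of_periodic {f : ℕ → X} (h : TracksModulo T p η w' w)
    (hf : Periodic f p) (hw : ∀ t, dist (T^[t] w) (f t) ≤ ρ) (t : ℕ) :
    dist (T^[t] w') (f t) ≤ η + ρ := by
  obtain ⟨s, hs, hd⟩ := h t
  have hfs : f s = f t := by rw [← hf.map_mod_nat s, (hs : s % p = t % p), hf.map_mod_nat]
  calc dist (T^[t] w') (f t) ≤ dist (T^[t] w') (T^[s] w) + dist (T^[s] w) (f s) := by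
        rw [hfs]; exact dist_triangle _ _ _
    _ ≤ η + ρ := add_le_add hd (hw s)

end Tracking

section Shadowing

variable {X : Type*} [MetricSpace X] {T : X → X} {p : ℕ} {δ η ρ : ℝ} {w : X}

theorem dist_iterate_mod_succ_lt_s6 (hp : 0 < p) (hw : dist (T^[p] w) w < δ) (k : ℕ) :
    dist (T (T^[k % p] w)) (T^[(k + 1) % p] w) < δ := by
  rw [← Nat.mod_add_mod k p 1, ← iterate_succ_apply' T, Nat.succ_eq_add_one]
  rcases (show k % p + 1 ≤ p from Nat.mod_lt k hp).eq_or_lt with h | h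
  · rw [h, Nat.mod_self]
    exact hw
  · rw [Nat.mod_eq_of_lt h, dist_self]
    exact dist_nonneg.trans_lt hw

theorem exists_dist_add_lt [CompactSpace X] (u : ℕ → X) (hδ : 0 < δ) :
    ∃ i d, 0 < d ∧ dist (u (i + d)) (u i) < δ := by
  obtain ⟨a, φ, hφ, hconv⟩ := CompactSpace.tendsto_subseq u
  obtain ⟨N, hN⟩ := Metric.cauchySeq_iff'.1 hconv.cauchySeq δ hδ
  have hlt : φ N < φ (N + 1) := hφ N.lt_succ_self
  refine ⟨φ N, φ (N + 1) - φ N, Nat.sub_pos_of_lt hlt, ?_⟩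
  rw [Nat.add_sub_cancel' hlt.le]
  exact hN (N + 1) N.le_succ

theorem ShadowingProperty.exists_tracksModulo_isPeriodicUpTo [CompactSpace X]
    (hsh : ShadowingProperty T) (w : X) (hp : 0 < p) (hη : 0 < η) :
    ∃ w' p', 0 < p' ∧ p ∣ p' ∧ TracksModulo T p η w' w ∧
      IsPeriodicUpTo T p' (2 * η) w' := by
  obtain ⟨δ, hδ, hshadow⟩ := hsh η hη
  -- a near return of `T^[p]` along the orbit of `w` closes up a periodic pseudo-orbit
  obtain ⟨i, d, hd, hclose⟩ := exists_dist_add_lt (fun k => T^[k * p] w) hδ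
  set w₀ := T^[i * p] w
  have hq : 0 < d * p := Nat.mul_pos hd hp
  have hret : dist (T^[d * p] w₀) w₀ < δ := by
    simpa only [w₀, ← iterate_add_apply, ← add_mul, add_comm d i] using hclose
  obtain ⟨w', hw'⟩ := hshadow (fun t => T^[t % (d * p)] w₀) (dist_iterate_mod_succ_lt_s6 hq hret)
  refine ⟨w', d * p, hq, dvd_mul_left p d, fun t => ⟨t % (d * p) + i * p, ?_, ?_⟩,
    fun a b hab => ?_⟩
  · calc t % (d * p) + i * p ≡ t % (d * p) + 0 [MOD p] :=
          Nat.ModEq.add_left _ (Nat.modEq_zero_iff_dvd.2 (dvd_mul_left p i))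
      _ ≡ t [MOD p] := (Nat.mod_modEq t _).of_dvd (dvd_mul_left p d)
  · rw [iterate_add_apply]
    exact (hw' t).le
  · calc dist (T^[a] w') (T^[b] w')
        ≤ dist (T^[a] w') (T^[a % (d * p)] w₀) + dist (T^[b] w') (T^[b % (d * p)] w₀) := by
          rw [show a % (d * p) = b % (d * p) from hab]
          exact dist_triangle_right _ _ _
      _ ≤ 2 * η := by linarith [hw' a, hw' b]

theorem ShadowingProperty.exists_tracking_chain [CompactSpace X] (hsh : ShadowingProperty T)
    (w₀ : X) (hp : 0 < p) (hη : 0 < η) :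
    ∃ (w : ℕ → X) (q : ℕ → ℕ), w 0 = w₀ ∧ q 0 = p ∧ (∀ m, 0 < q m) ∧
      (∀ m, IsPeriodicUpTo T (q (m + 1)) (η / 2 ^ m) (w (m + 1))) ∧
      ∀ m M, m ≤ M → TracksModulo T (q m) (η / 2 ^ m - η / 2 ^ M) (w M) (w m) := by
  have : Nonempty X := ⟨w₀⟩
  choose! W Q hQpos hdvd htrack hper using fun (v : X) (k : ℕ) (hk : 0 < k) (m : ℕ) =>
    hsh.exists_tracksModulo_isPeriodicUpTo v hk (η := η / 2 ^ (m + 1)) (by positivity)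
  let seq : ℕ → X × ℕ := fun m => Nat.rec (w₀, p) (fun m s => (W s.1 s.2 m, Q s.1 s.2 m)) m
  have hpos : ∀ m, 0 < (seq m).2 := by
    intro m
    induction m with
    | zero => exact hp
    | succ m ih => exact hQpos _ _ ih m
  have hdvd_le : ∀ m M, m ≤ M → (seq m).2 ∣ (seq M).2 := by
    intro m M hmM
    induction M, hmM using Nat.le_induction with
    | base => exact dvd_rfl
    | succ M _ ih => exact ih.trans (hdvd _ _ (hpos M) M)
  refine ⟨fun m => (seq m).1, fun m => (seq m).2, rfl, rfl, hpos, fun m => ?_,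
    fun m M hmM => ?_⟩
  · have h := hper (seq m).1 _ (hpos m) m
    rwa [pow_succ, ← div_div, mul_div_cancel₀ _ two_ne_zero] at h
  · induction M, hmM using Nat.le_induction with
    | base => simpa only [sub_self] using TracksModulo.refl T (seq m).2 (seq m).1
    | succ M hmM ih =>
      have h := (htrack _ _ (hpos M) M).trans ih (hdvd_le m M hmM)
      convert h using 1
      rw [pow_succ]
      ring

theorem ShadowingProperty.exists_isNearlyPeriodic_dist_le [CompactSpace X] (hT : Continuous T)
    (hsh : ShadowingProperty T) {f : ℕ → X} (hf : Periodic f p) (hp : 0 < p)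
    (hw : ∀ t, dist (T^[t] w) (f t) ≤ ρ) (hη : 0 < η) :
    ∃ z, IsNearlyPeriodic T z ∧ ∀ t, dist (T^[t] z) (f t) ≤ η + ρ := by
  obtain ⟨v, q, hv0, hq0, hqpos, hper, htrack⟩ := hsh.exists_tracking_chain w hp hη
  obtain ⟨z, φ, hφ, hconv⟩ := CompactSpace.tendsto_subseq v
  refine ⟨z, fun r hr => ?_, ?_⟩
  · obtain ⟨m, hm⟩ := exists_pow_lt_of_lt_one (div_pos hr (mul_pos two_pos hη))
      (two_inv_lt_one (α := ℝ))
    have hmr : 2 * (η / 2 ^ m) < r := by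
      rw [lt_div_iff₀ (by positivity)] at hm
      calc 2 * (η / 2 ^ m) = 2⁻¹ ^ m * (2 * η) := by rw [inv_pow]; ring
        _ < r := hm
    refine ⟨q (m + 1), hqpos (m + 1), (isClosed_setOf_isPeriodicUpTo hT _ _).mem_of_tendsto hconv
      (Filter.eventually_atTop.2 ⟨m + 1, fun i hi => ?_⟩)⟩
    have hM := (htrack (m + 1) (φ i) (hi.trans hφ.le_apply)).isPeriodicUpTo (hper m)
    refine hM.mono ?_
    have : 0 < η / 2 ^ φ i := by positivity
    have : η / 2 ^ (m + 1) = η / 2 ^ m / 2 := by rw [pow_succ, div_div]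
    linarith
  · have hclosed : IsClosed {u | ∀ t, dist (T^[t] u) (f t) ≤ η + ρ} := by
      simp only [ofPred_forall]
      exact isClosed_iInter fun t =>
        isClosed_le ((hT.iterate t).dist continuous_const) continuous_const
    refine hclosed.mem_of_tendsto hconv (Filter.Eventually.of_forall fun i t => ?_)
    show dist (T^[t] (v (φ i))) (f t) ≤ η + ρ
    have h := (htrack 0 (φ i) (Nat.zero_le _)).dist_le_of_periodic (hq0 ▸ hf) (hv0 ▸ hw) t
    have : 0 < η / 2 ^ φ i := by positivity
    simp only [pow_zero, div_one] at h
    linarith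

end Shadowing

theorem stmt6_general {X : Type*} [MetricSpace X] [CompactSpace X]
    (T : X → X) (hT : Continuous T) (hsh : ShadowingProperty T)
    (ε δ : ℝ) (hε : 0 < ε)
    (hδ : ∀ x : ℕ → X, (∀ k, dist (T (x k)) (x (k + 1)) < δ) →
      ∃ y : X, ∀ k, dist (T^[k] y) (x k) < ε / 4)
    (x : X) (n : ℕ) (hn : 0 < n) (hx : dist (T^[n] x) x < δ) :
    ∃ z : X, RegularlyRecurrent T z ∧
      (∃ h : Set.MapsTo T (orbitClosure T z) (orbitClosure T z),
        IsOdometer (Set.MapsTo.restrict T _ _ h)) ∧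
      ∀ j : ℕ, ∀ i < n, dist (T^[j * n + i] z) (T^[i] x) ≤ ε := by
  have hperiodic : Periodic (fun t => T^[t % n] x) n := fun t => by simp only [Nat.add_mod_right]
  obtain ⟨z₀, hz₀⟩ := hδ (fun t => T^[t % n] x) (dist_iterate_mod_succ_lt_s6 hn hx)
  obtain ⟨z, hz, hzx⟩ := hsh.exists_isNearlyPeriodic_dist_le hT hperiodic hn
    (fun t => (hz₀ t).le) (half_pos hε)
  refine ⟨z, hz.regularlyRecurrent, hz.isOdometer_restrict_orbitClosure hT, fun j i hi => ?_⟩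
  have h := hzx (j * n + i)
  rw [Nat.mul_add_mod_of_lt hi] at h
  linarith

theorem stmt6 {X : Type*} [MetricSpace X] [CompactSpace X]
    (T : X → X) (hT : Continuous T) (hsh : ShadowingProperty T)
    (ε δ : ℝ) (hε : 0 < ε) (hδpos : 0 < δ)
    (hδ : ∀ x : ℕ → X, (∀ k, dist (T (x k)) (x (k + 1)) < δ) →
      ∃ y : X, ∀ k, dist (T^[k] y) (x k) < ε / 4)
    (x : X) (n : ℕ) (hn : 0 < n) (hx : dist (T^[n] x) x < δ) :
    ∃ z : X, RegularlyRecurrent T z ∧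
      (∃ h : Set.MapsTo T (orbitClosure T z) (orbitClosure T z),
        IsOdometer (Set.MapsTo.restrict T _ _ h)) ∧
      ∀ j : ℕ, ∀ i < n, dist (T^[j * n + i] z) (T^[i] x) ≤ ε :=
  stmt6_general T hT hsh ε δ hε hδ x n hn hx
end
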